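/- Fix an integer k with 1 ≤ k ≤ N−1 and a function γ : ℝ → ℂ, and let 𝓝_{−k,γ} be the linear operator on H_N defined by 𝓝_{−k,γ}ψ^N_n := γ(nℏ)·ψ^N_{n−k} for k ≤ n ≤ N−1 and 𝓝_{−k,γ}ψ^N_n := 0 for 0 ≤ n < k. Then for every z ∈ ℂ∖{0}: 𝓝_{−k,γ}ψ^a_z = Σ_{n=0}^{N−1−k} conj(z)^k·ν_k(n)·√(C^N_n/C^N_{n+k})·γ((n+k)ℏ)·ã(τ(z)/ℏ − (n+k))·conj(φ_n(z))·φ_n. (This expresses 𝓝_{−k,γ}ψ^a_z = ψ^{Σ_{−k,γ}(z)a}_z, the lower-diagonal case of Proposition 3.4.) -/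

import Mathlib

/-!
Expanding `ρ_{e^{it}z}` binomially in the basis `φ_n` and integrating in `t` turns each
phase `e^{it(τ(z)/ℏ - n)}` into a value of `ã`, so `ψ^a_z = Σ_n ã(τ(z)/ℏ - n)·conj(φ_n(z))·φ_n`.
Since every `C^N_n > 0`, this is a finite combination of the vectors `ψ^N_n`, on which the
operator acts by the index shift `n ↦ n - k`. The stated coefficients then come from
`φ_{n+k}(z) = ν_k(n)·z^k·φ_n(z)`, i.e. from
`binom(N-1, n+k)·binom(n+k, k) = binom(N-1, n)·binom(N-1-n, k)`.
-/

open MeasureTheory Complex Real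

noncomputable section

/-- The measure `dμ_N(z) = (1/π)·(1+|z|²)^{-(N+1)} dA(z)` on `ℂ`. -/
def muN (N : ℕ) : Measure ℂ :=
  volume.withDensity (fun z => ENNReal.ofReal (1 / (Real.pi * (1 + ‖z‖ ^ 2) ^ (N + 1))))

/-- The basis vectors `φ_n(z) = √(N!/(n!(N−1−n)!))·zⁿ`. -/
def phiN (N n : ℕ) : ℂ → ℂ :=
  fun z => (Real.sqrt ((N.factorial : ℝ) / (n.factorial * (N - 1 - n).factorial)) : ℂ) * z ^ n

/-- The coherent state `ρ_{z₀}(z) = N·(1+conj(z₀)·z)^{N−1}`. -/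
def rhoN (N : ℕ) (z₀ : ℂ) : ℂ → ℂ :=
  fun z => (N : ℂ) * (1 + (starRingEnd ℂ) z₀ * z) ^ (N - 1)

/-- The inner product `⟨P,Q⟩ = ∫ P(z) conj(Q(z)) dμ_N(z)`, linear in the first argument. -/
def hermN (N : ℕ) (P Q : ℂ → ℂ) : ℂ :=
  ∫ z, P z * (starRingEnd ℂ) (Q z) ∂(muN N)

/-- The Fourier transform `ã(y) = (2π)^{-1/2} ∫ e^{ixy} a(x) dx`. -/
def tildeF (a : ℝ → ℂ) (y : ℝ) : ℂ :=
  (Real.sqrt (2 * Real.pi))⁻¹ * ∫ x : ℝ, Complex.exp (Complex.I * x * y) * a x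

/-- `τ(z) = |z|²/(1+|z|²)`. -/
def tauS (z : ℂ) : ℝ := ‖z‖ ^ 2 / (1 + ‖z‖ ^ 2)

/-- The building vector `ψ^a_z = ∫ a(t)·e^{iτ(z)t/ℏ}·ρ_{e^{it}z} dt/√(2π)`. -/
def psiA (N : ℕ) (ℏ : ℝ) (a : ℝ → ℂ) (z : ℂ) : ℂ → ℂ :=
  fun w => ∫ t : ℝ, a t * Complex.exp (Complex.I * (tauS z) * t / (ℏ : ℂ)) *
    rhoN N (Complex.exp (Complex.I * t) * z) w / (Real.sqrt (2 * Real.pi) : ℂ)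

/-- `C^N_n = N·binom(N−1,n)·∫₀¹ |ã((τ−nℏ)/ℏ)|²·(τ/(1−τ))ⁿ·(1−τ)^{N−1} dτ`. -/
def CNn (N : ℕ) (ℏ : ℝ) (a : ℝ → ℂ) (n : ℕ) : ℝ :=
  N * ((N - 1).choose n) *
    ∫ τ in (0:ℝ)..1, ‖tildeF a ((τ - n * ℏ) / ℏ)‖ ^ 2 * (τ / (1 - τ)) ^ n * (1 - τ) ^ (N - 1)

/-- The normalized vectors `ψ^N_n = √(C^N_n)·φ_n`. -/
def psiNn (N : ℕ) (ℏ : ℝ) (a : ℝ → ℂ) (n : ℕ) : ℂ → ℂ :=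
  fun z => (Real.sqrt (CNn N ℏ a n) : ℂ) * phiN N n z

open Finset Nat

theorem Finset.sum_range_ite_le {M : Type*} [AddCommMonoid M] (N k : ℕ) (f : ℕ → M) :
    ∑ n ∈ range N, (if k ≤ n then f n else 0) = ∑ n ∈ range (N - k), f (n + k) := by
  rw [← sum_filter, range_eq_Ico, Ico_filter_le, Nat.zero_max, sum_Ico_eq_sum_range]
  simp only [add_comm]

theorem factorial_div_eq_mul_choose {N n : ℕ} (hn : n < N) :
    (N ! : ℝ) / (n ! * (N - 1 - n)!) = N * (N - 1).choose n := by
  obtain ⟨M, rfl⟩ : ∃ M, N = M + 1 := ⟨N - 1, by omega⟩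
  rw [Nat.add_sub_cancel, div_eq_iff (by positivity), Nat.factorial_succ,
    ← Nat.choose_mul_factorial_mul_factorial (show n ≤ M by omega)]
  push_cast
  ring

theorem phiN_mul_left (N n : ℕ) (c z : ℂ) : phiN N n (c * z) = c ^ n * phiN N n z := by
  simp only [phiN]
  ring

theorem conj_phiN_mul_phiN {N n : ℕ} (hn : n < N) (z₀ w : ℂ) :
    starRingEnd ℂ (phiN N n z₀) * phiN N n w
      = N * (N - 1).choose n * (starRingEnd ℂ z₀ * w) ^ n := by
  have hsq : ((√((N ! : ℝ) / (n ! * (N - 1 - n)!)) : ℂ)) ^ 2 = N * (N - 1).choose n := by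
    rw [← Complex.ofReal_pow, Real.sq_sqrt (by positivity),
      factorial_div_eq_mul_choose hn]
    push_cast
    rfl
  simp only [phiN, map_mul, Complex.conj_ofReal, map_pow]
  rw [← hsq]
  ring

theorem rhoN_eq_sum (N : ℕ) (z₀ w : ℂ) :
    rhoN N z₀ w = ∑ n ∈ range N, starRingEnd ℂ (phiN N n z₀) * phiN N n w := by
  rcases N with _ | M
  · simp [rhoN]
  rw [rhoN, Nat.add_sub_cancel, add_comm (1 : ℂ), add_pow, mul_sum]
  refine sum_congr rfl fun n hn => ?_
  rw [conj_phiN_mul_phiN (mem_range.1 hn)]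
  push_cast
  ring

theorem phiN_add {N n k : ℕ} (h : n + k < N) (z : ℂ) :
    phiN N (n + k) z
      = (√(((N - 1 - n).choose k : ℝ) / ((n + k).choose k : ℝ)) : ℂ) * z ^ k * phiN N n z := by
  have hchoose : ((N - 1).choose (n + k) : ℝ)
      = (N - 1).choose n * (N - 1 - n).choose k / (n + k).choose k := by
    have h := Nat.choose_mul (n := N - 1) (Nat.le_add_right n k)
    rw [Nat.add_sub_cancel_left, Nat.choose_symm_add] at h
    rw [eq_div_iff (by exact_mod_cast (Nat.choose_pos (Nat.le_add_left k n)).ne')]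
    exact_mod_cast h
  have hcoef : (N ! : ℝ) / ((n + k)! * (N - 1 - (n + k))!)
      = (N - 1 - n).choose k / (n + k).choose k * (N ! / (n ! * (N - 1 - n)!)) := by
    rw [factorial_div_eq_mul_choose h,
      factorial_div_eq_mul_choose (by omega), hchoose]
    ring
  simp only [phiN]
  rw [hcoef, Real.sqrt_mul (by positivity)]
  push_cast
  ring

theorem MeasureTheory.Integrable.exp_I_mul_mul {a : ℝ → ℂ} (ha : Integrable a) (y : ℝ) :
    Integrable (fun t : ℝ => Complex.exp (Complex.I * t * y) * a t) := by
  refine ha.bdd_mul (c := 1) (by fun_prop) (Filter.Eventually.of_forall fun t => ?_)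
  rw [Complex.norm_exp]
  simp [Complex.mul_re]

theorem psiA_eq_sum (N : ℕ) (ℏ : ℝ) {a : ℝ → ℂ} (ha : Integrable a) (z : ℂ) :
    psiA N ℏ a z = ∑ n ∈ range N,
      (tildeF a (tauS z / ℏ - n) * starRingEnd ℂ (phiN N n z)) • phiN N n := by
  have hconj (t : ℝ) :
      starRingEnd ℂ (Complex.exp (Complex.I * t)) = Complex.exp (-(Complex.I * t)) := by
    rw [← Complex.exp_conj, map_mul, Complex.conj_I, Complex.conj_ofReal, neg_mul]
  have hphase (t : ℝ) (n : ℕ) :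
      Complex.exp (Complex.I * tauS z * t / ℏ) * Complex.exp (-(Complex.I * t)) ^ n
        = Complex.exp (Complex.I * t * ((tauS z / ℏ - n : ℝ) : ℂ)) := by
    rw [← Complex.exp_nat_mul, ← Complex.exp_add]
    push_cast
    ring_nf
  funext w
  have hexpand : psiA N ℏ a z w
      = ∫ t : ℝ, ∑ n ∈ range N, Complex.exp (Complex.I * t * ((tauS z / ℏ - n : ℝ) : ℂ))
        * a t * (starRingEnd ℂ (phiN N n z) * phiN N n w / (√(2 * π) : ℂ)) := by
    refine integral_congr_ae (Filter.Eventually.of_forall fun t => ?_)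
    simp only
    rw [rhoN_eq_sum, mul_sum, sum_div]
    refine sum_congr rfl fun n _ => ?_
    rw [phiN_mul_left, map_mul, map_pow, hconj, ← hphase]
    ring
  rw [hexpand, integral_finsetSum _ fun n _ => (ha.exp_I_mul_mul _).mul_const _,
    Finset.sum_apply]
  refine sum_congr rfl fun n _ => ?_
  rw [integral_mul_const, Pi.smul_apply, smul_eq_mul, tildeF, Complex.ofReal_inv]
  ring

theorem apply_phiN_of_apply_psiNn {N : ℕ} {ℏ : ℝ} {a : ℝ → ℂ} {k n : ℕ} {c : ℂ}
    (T : (ℂ → ℂ) →ₗ[ℂ] (ℂ → ℂ)) (hCn : 0 < CNn N ℏ a n)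
    (hTn : T (psiNn N ℏ a n) = if k ≤ n then c • psiNn N ℏ a (n - k) else 0) :
    T (phiN N n) = if k ≤ n then
      (c * (√(CNn N ℏ a (n - k)) / √(CNn N ℏ a n) : ℝ)) • phiN N (n - k) else 0 := by
  have hsqrt : (√(CNn N ℏ a n) : ℂ) ≠ 0 := by
    exact_mod_cast (Real.sqrt_pos.2 hCn).ne'
  have hphi : phiN N n = (√(CNn N ℏ a n) : ℂ)⁻¹ • psiNn N ℏ a n := by
    funext w
    simp [psiNn, hsqrt]
  rw [hphi, map_smul, hTn]
  split_ifs
  · funext w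
    simp only [Pi.smul_apply, smul_eq_mul, psiNn]
    push_cast
    ring
  · exact smul_zero _

theorem stmt9_general (N : ℕ) (ℏ : ℝ) (a : SchwartzMap ℝ ℂ)
    (hC : ∀ n : ℕ, n ≤ N - 1 → 0 < CNn N ℏ (⇑a) n)
    (k : ℕ) (γ : ℝ → ℂ)
    (T : (ℂ → ℂ) →ₗ[ℂ] (ℂ → ℂ))
    (hT : ∀ n : ℕ, n ≤ N - 1 →
      T (psiNn N ℏ (⇑a) n)
        = if k ≤ n then γ ((n : ℝ) * ℏ) • psiNn N ℏ (⇑a) (n - k) else 0)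
    (z : ℂ) :
    T (psiA N ℏ (⇑a) z) = fun w => ∑ n ∈ Finset.range (N - k),
      ((starRingEnd ℂ) z) ^ k
        * (Real.sqrt (((N - 1 - n).choose k : ℝ) / ((n + k).choose k : ℝ)) : ℂ)
        * (Real.sqrt (CNn N ℏ (⇑a) n / CNn N ℏ (⇑a) (n + k)) : ℂ)
        * γ (((n : ℝ) + k) * ℏ)
        * tildeF (⇑a) (tauS z / ℏ - ((n : ℝ) + k))
        * (starRingEnd ℂ) (phiN N n z) * phiN N n w := by
  have hTphi (n : ℕ) (hn : n ∈ range N) :=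
    apply_phiN_of_apply_psiNn T (hC n (by grind)) (hT n (by grind))
  rw [psiA_eq_sum N ℏ a.integrable z, map_sum,
    sum_congr rfl fun n hn => by rw [map_smul, hTphi n hn, smul_ite, smul_zero],
    sum_range_ite_le]
  funext w
  refine (Finset.sum_apply w _ _).trans (sum_congr rfl fun n hn => ?_)
  rw [Pi.smul_apply, Pi.smul_apply, Nat.add_sub_cancel, phiN_add (by grind) z,
    Real.sqrt_div' _ (hC _ (by grind)).le]
  simp only [smul_eq_mul, map_mul, map_pow, Complex.conj_ofReal]
  push_cast
  ring

/-- lower-diagonal case of Proposition 3.4: for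
`𝓝_{−k,γ}ψ^N_n = γ(nℏ)·ψ^N_{n−k}` (for `k ≤ n ≤ N−1`, and `0` otherwise), one has, for
`z ≠ 0`,
`𝓝_{−k,γ}ψ^a_z = Σ_{n=0}^{N−1−k} conj(z)^k·ν_k(n)·√(C^N_n/C^N_{n+k})·γ((n+k)ℏ)·
                  ã(τ(z)/ℏ−(n+k))·conj(φ_n(z))·φ_n`. -/
theorem stmt9 (N : ℕ) (hN : 1 ≤ N) (ℏ : ℝ) (hℏ : 0 < ℏ) (a : SchwartzMap ℝ ℂ)
    (hC : ∀ n : ℕ, n ≤ N - 1 → 0 < CNn N ℏ (⇑a) n)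
    (k : ℕ) (hk1 : 1 ≤ k) (hk2 : k ≤ N - 1) (γ : ℝ → ℂ)
    (T : (ℂ → ℂ) →ₗ[ℂ] (ℂ → ℂ))
    (hT : ∀ n : ℕ, n ≤ N - 1 →
      T (psiNn N ℏ (⇑a) n)
        = if k ≤ n then γ ((n : ℝ) * ℏ) • psiNn N ℏ (⇑a) (n - k) else 0)
    (z : ℂ) (hz : z ≠ 0) :
    T (psiA N ℏ (⇑a) z) = fun w => ∑ n ∈ Finset.range (N - k),
      ((starRingEnd ℂ) z) ^ k
        * (Real.sqrt (((N - 1 - n).choose k : ℝ) / ((n + k).choose k : ℝ)) : ℂ)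
        * (Real.sqrt (CNn N ℏ (⇑a) n / CNn N ℏ (⇑a) (n + k)) : ℂ)
        * γ (((n : ℝ) + k) * ℏ)
        * tildeF (⇑a) (tauS z / ℏ - ((n : ℝ) + k))
        * (starRingEnd ℂ) (phiN N n z) * phiN N n w :=
  stmt9_general N ℏ a hC k γ T hT z
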